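/- Let G be the simple graph on vertices a_1, a_2, a_3, x_1, x_2 with edges a_1–a_2, a_1–a_3, a_2–a_3, a_1–x_1, a_2–x_2, x_1–x_2. Then G has, up to semigroup isomorphism, a unique corresponding commutative zero-divisor semigroup, namely S = {0, a_1, a_2, a_3, x_1, x_2} with multiplication a_1² = a_2² = a_3² = 0, a_1a_2 = a_1a_3 = a_2a_3 = 0, a_1x_1 = 0, a_1x_2 = a_1, a_2x_1 = a_2, a_2x_2 = 0, a_3x_1 = a_2, a_3x_2 = a_1, x_1² = x_1, x_2² = x_2, x_1x_2 = 0; this multiplication is associative, Γ(S) ≅ G, and every commutative zero-divisor semigroup T with Γ(T) ≅ G is isomorphic to S. -/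

import Mathlib

/-!
An isomorphism `Γ(T) ≅ Γ(S)` of zero-divisor graphs extends, by `0 ↦ 0`, to a bijection
`T ≃ S` that preserves which products of distinct elements vanish. Transporting the
multiplication of `T` along such a bijection to `S6` therefore yields a commutative semigroup
law with the zero products of `mul13`, and such a law is `mul13` itself. A product `u * w` of
non-adjacent vertices annihilates everything `u` or `w` annihilates, which leaves exactly one
nonzero candidate; the squares then follow by associativity, e.g. `a₁² = a₁ (a₃ x₂) = 0` and
`x₁² a₂ = x₁ (x₁ a₂) = a₂`, which only `x₁` satisfies.
-/

/-- A commutative semigroup with a (left- and right-) absorbing zero element. -/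
class CommSemigroupWithZero (S : Type*) extends CommSemigroup S, MulZeroClass S

/-- A zero-divisor semigroup: every element is annihilated by some nonzero element. -/
def IsZeroDivisorSemigroup (S : Type*) [CommSemigroupWithZero S] : Prop :=
  ∀ s : S, ∃ t : S, t ≠ 0 ∧ s * t = 0

/-- The zero-divisor graph Γ(S): vertices are the nonzero zero-divisors, distinct
vertices are adjacent iff their product is zero. -/
def zdGraph (S : Type*) [CommSemigroupWithZero S] :
    SimpleGraph {s : S // s ≠ 0 ∧ ∃ t : S, t ≠ 0 ∧ s * t = 0} where
  Adj x y := x ≠ y ∧ (x : S) * y = 0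
  symm := ⟨by
    rintro x y ⟨h1, h2⟩
    exact ⟨h1.symm, by rwa [mul_comm]⟩⟩
  loopless := ⟨fun x h => h.1 rfl⟩

/-- A six-element carrier {0, a₁, a₂, a₃, x₁, x₂}. -/
inductive S6 : Type
  | zero | a1 | a2 | a3 | x1 | x2
deriving DecidableEq

open S6

/-- The multiplication table of Corollary 2.4. -/
def mul13 : S6 → S6 → S6
  | zero, _ => zero
  | _, zero => zero
  | a1, a1 => zero
  | a1, a2 => zero
  | a2, a1 => zero
  | a1, a3 => zero
  | a3, a1 => zero
  | a1, x1 => zero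
  | x1, a1 => zero
  | a1, x2 => a1
  | x2, a1 => a1
  | a2, a2 => zero
  | a2, a3 => zero
  | a3, a2 => zero
  | a2, x1 => a2
  | x1, a2 => a2
  | a2, x2 => zero
  | x2, a2 => zero
  | a3, a3 => zero
  | a3, x1 => a2
  | x1, a3 => a2
  | a3, x2 => a1
  | x2, a3 => a1
  | x1, x1 => x1
  | x1, x2 => zero
  | x2, x1 => zero
  | x2, x2 => x2

/-- The graph G of Corollary 2.4: K₃ = {0,1,2} (= a₁,a₂,a₃) together with end
vertices 3 (= x₁, attached to a₁), 4 (= x₂, attached to a₂) and the edge x₁x₂. -/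
def G13 : SimpleGraph (Fin 5) :=
  SimpleGraph.fromRel (fun u v =>
    (u = 0 ∧ v = 1) ∨ (u = 0 ∧ v = 2) ∨ (u = 1 ∧ v = 2) ∨
    (u = 0 ∧ v = 3) ∨ (u = 1 ∧ v = 4) ∨ (u = 3 ∧ v = 4))

section ZeroDivisorGraphIso

variable {T S : Type*} [CommSemigroupWithZero T] [CommSemigroupWithZero S]

def IsZeroDivisorSemigroup.vertexEquiv (hT : IsZeroDivisorSemigroup T) :
    {s : T // s ≠ 0 ∧ ∃ t : T, t ≠ 0 ∧ s * t = 0} ≃ {s : T // s ≠ 0} :=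
  Equiv.subtypeEquivRight fun s => and_iff_left (hT s)

theorem exists_equiv_of_zdGraph_iso (hT : IsZeroDivisorSemigroup T)
    (hS : IsZeroDivisorSemigroup S) (φ : zdGraph T ≃g zdGraph S) :
    ∃ e : T ≃ S, e 0 = 0 ∧ ∀ s t, s ≠ t → (e s * e t = 0 ↔ s * t = 0) := by
  classical
  let ψ : {s : T // s ≠ 0} ≃ {s : S // s ≠ 0} :=
    hT.vertexEquiv.symm.trans (φ.toEquiv.trans hS.vertexEquiv)
  let e : T ≃ S := (Equiv.optionSubtypeNe 0).symm.trans <|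
    (Equiv.optionCongr ψ).trans (Equiv.optionSubtypeNe 0)
  have e_zero : e 0 = 0 := by simp [e]
  have e_of_ne_zero : ∀ s (hs : s ≠ 0), e s = φ ⟨s, hs, hT s⟩ := fun s hs => by
    simp only [e, Equiv.trans_apply, Equiv.optionSubtypeNe_symm_of_ne hs, Equiv.optionCongr_apply,
      Option.map_some, Equiv.optionSubtypeNe_some]
    rfl
  refine ⟨e, e_zero, fun s t hst => ?_⟩
  rcases eq_or_ne s 0 with rfl | hs
  · simp [e_zero]
  rcases eq_or_ne t 0 with rfl | ht
  · simp [e_zero]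
  rw [e_of_ne_zero s hs, e_of_ne_zero t ht]
  have hne : (⟨s, hs, hT s⟩ : {s : T // s ≠ 0 ∧ ∃ t : T, t ≠ 0 ∧ s * t = 0}) ≠
      ⟨t, ht, hT t⟩ :=
    Subtype.coe_ne_coe.mp hst
  exact (and_iff_right (φ.injective.ne hne)).symm.trans
    (φ.map_adj_iff.trans (and_iff_right hne))

end ZeroDivisorGraphIso

instance : Fintype S6 where
  elems := {zero, a1, a2, a3, x1, x2}
  complete s := by cases s <;> decide

instance : DecidableRel G13.Adj := by unfold G13; infer_instance

theorem mul13_assoc (a b c : S6) : mul13 (mul13 a b) c = mul13 a (mul13 b c) := by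
  revert a b c; decide

theorem mul13_comm (a b : S6) : mul13 a b = mul13 b a := by
  revert a b; decide

theorem zero_mul13 (a : S6) : mul13 zero a = zero := rfl

theorem mul13_zero (a : S6) : mul13 a zero = zero := by
  cases a <;> rfl

theorem exists_ne_zero_mul13_eq_zero (a : S6) : ∃ t, t ≠ zero ∧ mul13 a t = zero := by
  revert a; decide

instance : CommSemigroupWithZero S6 where
  mul := mul13
  mul_assoc := mul13_assoc
  mul_comm := mul13_comm
  zero := zero
  zero_mul := zero_mul13
  mul_zero := mul13_zero

theorem S6.isZeroDivisorSemigroup : IsZeroDivisorSemigroup S6 :=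
  exists_ne_zero_mul13_eq_zero

def S6.ofFin : Fin 5 → S6 := ![a1, a2, a3, x1, x2]

noncomputable def G13.isoZdGraph : G13 ≃g zdGraph S6 where
  toEquiv := Equiv.ofBijective
    (fun i => ⟨S6.ofFin i, by revert i; decide, S6.isZeroDivisorSemigroup _⟩) (by
      constructor
      · intro i j h
        revert i j; decide
      · rintro ⟨s, hs, -⟩
        obtain ⟨i, hi⟩ : ∃ i, S6.ofFin i = s := by revert s; decide
        exact ⟨i, Subtype.ext hi⟩)
  map_rel_iff' {i j} := by
    simp only [zdGraph, ne_eq]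
    revert i j; decide

-- Since `u * j = 0` implies `(u * w) * j = 0`, this determines every nonzero product of distinct
-- elements from the zero products alone.
theorem mul13_eq_of_annihilates (u w t : S6) (huw : u ≠ w) (hz : mul13 u w ≠ zero)
    (ht : t ≠ zero)
    (hann : ∀ j, (j ≠ u ∧ mul13 u j = zero) ∨ (j ≠ w ∧ mul13 w j = zero) → j ≠ t →
      mul13 t j = zero) :
    t = mul13 u w := by
  revert u w t; decide

structure IsG13Law (m : S6 → S6 → S6) : Prop where
  comm : ∀ s t, m s t = m t s
  assoc : ∀ s t u, m (m s t) u = m s (m t u)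
  zero_mul : ∀ s, m zero s = zero
  eq_zero_iff : ∀ s t, s ≠ t → (m s t = zero ↔ mul13 s t = zero)

namespace IsG13Law

variable {m : S6 → S6 → S6}

theorem mul_mul_eq_zero_of_left (h : IsG13Law m) {u w j : S6} (hj : m u j = zero) :
    m (m u w) j = zero := by
  rw [h.assoc, h.comm w j, ← h.assoc, hj, h.zero_mul]

theorem mul_eq_mul13_of_ne (h : IsG13Law m) {u w : S6} (huw : u ≠ w) : m u w = mul13 u w := by
  by_cases hz : mul13 u w = zero
  · rw [hz]
    exact (h.eq_zero_iff u w huw).2 hz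
  refine mul13_eq_of_annihilates u w _ huw hz ((h.eq_zero_iff u w huw).not.2 hz) ?_
  rintro j (⟨hju, hj⟩ | ⟨hjw, hj⟩) hjt <;> rw [← h.eq_zero_iff _ _ hjt.symm]
  · exact h.mul_mul_eq_zero_of_left ((h.eq_zero_iff u j hju.symm).2 hj)
  · rw [h.comm u w]
    exact h.mul_mul_eq_zero_of_left ((h.eq_zero_iff w j hjw.symm).2 hj)

theorem eq_mul13 (h : IsG13Law m) : m = mul13 := by
  have off : ∀ u w, u ≠ w → m u w = mul13 u w := fun _ _ => h.mul_eq_mul13_of_ne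
  have col_eq : ∀ j, m j j = mul13 j j → ∀ c, m c j = mul13 c j := fun j hj c => by
    rcases eq_or_ne c j with rfl | hc
    exacts [hj, off c j hc]
  have sq_a1 : m a1 a1 = zero := by
    have := h.mul_mul_eq_zero_of_left (w := x2) (off a3 a1 (by decide))
    rwa [off a3 x2 (by decide)] at this
  have sq_a2 : m a2 a2 = zero := by
    have := h.mul_mul_eq_zero_of_left (w := x1) (off a3 a2 (by decide))
    rwa [off a3 x1 (by decide)] at this
  -- `x1` is the only `c` with `c * a2 = a2`, `x2` the only one with `c * a1 = a1`.
  have sq_x1 : m x1 x1 = x1 := by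
    have key : mul13 (m x1 x1) a2 = a2 := by
      rw [← col_eq a2 sq_a2, h.assoc, off x1 a2 (by decide)]
      exact off x1 a2 (by decide)
    generalize m x1 x1 = t at key
    revert t; decide
  have sq_x2 : m x2 x2 = x2 := by
    have key : mul13 (m x2 x2) a1 = a1 := by
      rw [← col_eq a1 sq_a1, h.assoc, off x2 a1 (by decide)]
      exact off x2 a1 (by decide)
    generalize m x2 x2 = t at key
    revert t; decide
  -- Only `zero` annihilates both `x1` and `x2`.
  have sq_a3 : m a3 a3 = zero := by
    have key1 : mul13 (m a3 a3) x1 = zero := by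
      rw [← col_eq x1 sq_x1, h.assoc, off a3 x1 (by decide)]
      exact off a3 a2 (by decide)
    have key2 : mul13 (m a3 a3) x2 = zero := by
      rw [← col_eq x2 sq_x2, h.assoc, off a3 x2 (by decide)]
      exact off a3 a1 (by decide)
    generalize m a3 a3 = t at key1 key2
    revert t; decide
  funext s t
  rcases eq_or_ne s t with rfl | hst
  · cases s
    exacts [h.zero_mul zero, sq_a1, sq_a2, sq_a3, sq_x1, sq_x2]
  · exact off s t hst

end IsG13Law

theorem isG13Law_of_equiv {T : Type*} [CommSemigroupWithZero T] (e : T ≃ S6) (he0 : e 0 = 0)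
    (he : ∀ s t, s ≠ t → (e s * e t = 0 ↔ s * t = 0)) :
    IsG13Law fun u v => e (e.symm u * e.symm v) where
  comm u v := by rw [mul_comm]
  assoc u v w := by simp only [Equiv.symm_apply_apply, mul_assoc]
  zero_mul u := by
    change e (e.symm 0 * _) = 0
    rw [e.symm_apply_eq.2 he0.symm, zero_mul]
    exact he0
  eq_zero_iff u v huv := by
    have := he (e.symm u) (e.symm v) (e.symm.injective.ne huv)
    simp only [Equiv.apply_symm_apply] at this
    change e _ = 0 ↔ u * v = 0
    rw [this, ← he0, e.apply_eq_iff_eq]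

theorem mul13_eq_zero_iff (u v : S6) (hu : u ≠ zero) (hv : v ≠ zero) (huv : u ≠ v) :
    mul13 u v = zero ↔
      ({u, v} : Set S6) = {a1, a2} ∨ ({u, v} : Set S6) = {a1, a3} ∨
      ({u, v} : Set S6) = {a2, a3} ∨ ({u, v} : Set S6) = {a1, x1} ∨
      ({u, v} : Set S6) = {a2, x2} ∨ ({u, v} : Set S6) = {x1, x2} := by
  simp only [Set.pair_eq_pair_iff]
  revert u v; decide

/-- **Corollary 2.4.** The graph G13 has a unique corresponding commutative
zero-divisor semigroup: `mul13` is an associative, commutative multiplication on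
{0, a₁, a₂, a₃, x₁, x₂} with absorbing zero making it a zero-divisor semigroup,
its zero-divisor graph is the graph G13, and every commutative zero-divisor
semigroup T with Γ(T) ≅ G13 is isomorphic to it. -/
theorem G13_unique_semigroup :
    (∀ a b c : S6, mul13 (mul13 a b) c = mul13 a (mul13 b c)) ∧
    (∀ a b : S6, mul13 a b = mul13 b a) ∧
    (∀ a : S6, mul13 zero a = zero) ∧
    (∀ a : S6, ∃ t : S6, t ≠ zero ∧ mul13 a t = zero) ∧
    (∀ u v : S6, u ≠ zero → v ≠ zero → u ≠ v →
      (mul13 u v = zero ↔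
        ({u, v} : Set S6) = {a1, a2} ∨ ({u, v} : Set S6) = {a1, a3} ∨
        ({u, v} : Set S6) = {a2, a3} ∨ ({u, v} : Set S6) = {a1, x1} ∨
        ({u, v} : Set S6) = {a2, x2} ∨ ({u, v} : Set S6) = {x1, x2})) ∧
    (∀ (T : Type) [CommSemigroupWithZero T], IsZeroDivisorSemigroup T →
      Nonempty (zdGraph T ≃g G13) →
      ∃ e : T ≃ S6, e 0 = zero ∧ ∀ s t : T, e (s * t) = mul13 (e s) (e t)) := by
  refine ⟨mul13_assoc, mul13_comm, zero_mul13, exists_ne_zero_mul13_eq_zero, mul13_eq_zero_iff,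
    fun T _ hT ⟨φ⟩ => ?_⟩
  obtain ⟨e, he0, he⟩ :=
    exists_equiv_of_zdGraph_iso hT S6.isZeroDivisorSemigroup (φ.trans G13.isoZdGraph)
  refine ⟨e, he0, fun s t => ?_⟩
  simpa using congrFun₂ (isG13Law_of_equiv e he0 he).eq_mul13 (e s) (e t)
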